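/- arXiv:math/0509727 — 2 statements merged into one kernel-verified Lean document; each statement's English description precedes it below -/
import Mathlib

section
/- Let h(x,y) = ∏_{i=0}^{n} ((x,y), v_i) be a homogeneous polynomial of degree n+1 ≥ 3 in two complex variables with ‖h‖_max = 1, where v_i = (v_{i,1}, v_{i,2}) ∈ ℂ². Define the discriminant Σ = ∏_{i<j} (v_{i,1} v_{j,2} − v_{i,2} v_{j,1})². Then |Σ| ≤ n^{6n²}. -/
open MvPolynomial

/-- Maximum of `|p|` on the unit sphere of ℂ². -/
noncomputable def sphereMax (p : MvPolynomial (Fin 2) ℂ) : ℝ :=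
  sSup {r : ℝ | ∃ x y : ℂ, ‖x‖ ^ 2 + ‖y‖ ^ 2 = 1 ∧ r = ‖MvPolynomial.eval ![x, y] p‖}

/-!
Take `N = n + 2` unit vectors `a_k = (1, ζ^k) / √2`, `ζ = exp(2πi/N)`; any two of them satisfy
`|det(a_k, a_l)| = |ζ^l - ζ^k| / 2 ≥ 2/N`. Cramer's rule gives `|det(a, b)| ‖v‖ ≤ |(a, v)| + |(b, v)|`
for unit `a, b`, so each `v_i` satisfies `|(a_k, v_i)| < ‖v_i‖ / N` for at most one `k`. With only
`n + 1` vectors `v_i`, some `a_k` escapes all of them, whence `∏ ‖v_i‖ ≤ N^(n+1) |h(a_k)| ≤ N^(n+1)`.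
Hadamard's inequality `|det(v_i, v_j)| ≤ ‖v_i‖ ‖v_j‖` then bounds `|Σ|` by
`(∏ ‖v_i‖)^(2n) ≤ (n+2)^(2n(n+1)) ≤ n^(6n²)`.
-/

open Complex ComplexConjugate WithLp
open scoped InnerProductSpace Real

local notation "ℂ²" => WithLp 2 (ℂ × ℂ)

def det2 (a b : ℂ²) : ℂ := a.fst * b.snd - a.snd * b.fst

noncomputable def perp (a : ℂ²) : ℂ² := toLp 2 (-conj a.snd, conj a.fst)

lemma norm_perp (a : ℂ²) : ‖perp a‖ = ‖a‖ := by
  simp [prod_norm_eq_of_L2, perp, add_comm]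

lemma inner_perp_left (a b : ℂ²) : ⟪perp a, b⟫_ℂ = det2 a b := by
  simp [perp, det2]; ring

lemma norm_det2_le (a b : ℂ²) : ‖det2 a b‖ ≤ ‖a‖ * ‖b‖ := by
  rw [← inner_perp_left, ← norm_perp]
  exact norm_inner_le_norm _ _

lemma conj_det2_smul (a b v : ℂ²) :
    conj (det2 a b) • v = ⟪b, v⟫_ℂ • perp a - ⟪a, v⟫_ℂ • perp b := by
  apply ofLp_injective 2
  ext <;> simp [perp, det2] <;> ring

lemma norm_det2_mul_norm_le (a b v : ℂ²) :
    ‖det2 a b‖ * ‖v‖ ≤ ‖a‖ * ‖⟪v, b⟫_ℂ‖ + ‖b‖ * ‖⟪v, a⟫_ℂ‖ := by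
  calc ‖det2 a b‖ * ‖v‖ = ‖⟪b, v⟫_ℂ • perp a - ⟪a, v⟫_ℂ • perp b‖ := by
        rw [← conj_det2_smul, norm_smul, RCLike.norm_conj]
    _ ≤ ‖⟪b, v⟫_ℂ • perp a‖ + ‖⟪a, v⟫_ℂ • perp b‖ := norm_sub_le _ _
    _ = _ := by simp only [norm_smul, norm_perp, norm_inner_symm v]; ring

lemma norm_eval_le_sphereMax (p : MvPolynomial (Fin 2) ℂ) {z : ℂ²} (hz : ‖z‖ = 1) :
    ‖eval ![z.fst, z.snd] p‖ ≤ sphereMax p := by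
  apply le_csSup
  · obtain ⟨B, hB⟩ := (isCompact_sphere (0 : ℂ²) 1).exists_bound_of_continuousOn
      (f := fun z : ℂ² => eval ![z.fst, z.snd] p)
      ((MvPolynomial.continuous_eval p).comp (by fun_prop)).continuousOn
    refine ⟨B, ?_⟩
    rintro r ⟨x, y, hxy, rfl⟩
    exact hB (toLp 2 (x, y)) (by simp [prod_norm_eq_of_L2, hxy])
  · exact ⟨z.fst, z.snd, by rw [← prod_norm_sq_eq_of_L2, hz, one_pow], rfl⟩

lemma exists_forall_mul_norm_le_norm_inner {ι κ : Type*} [Fintype ι] [Fintype κ]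
    (hcard : Fintype.card ι < Fintype.card κ) {a : κ → ℂ²} (ha : ∀ k, ‖a k‖ ≤ 1) {c : ℝ}
    (hsep : ∀ k l, k ≠ l → 2 * c ≤ ‖det2 (a k) (a l)‖) (v : ι → ℂ²) :
    ∃ k, ∀ i, c * ‖v i‖ ≤ ‖⟪v i, a k⟫_ℂ‖ := by
  by_contra! hbad
  choose g hg using hbad
  obtain ⟨k, l, hkl, hgkl⟩ := Fintype.exists_ne_map_eq_of_card_lt g hcard
  have hk := hg k
  have hl := hg l
  rw [← hgkl] at hl
  set w := v (g k)
  have : 2 * c * ‖w‖ ≤ ‖⟪w, a l⟫_ℂ‖ + ‖⟪w, a k⟫_ℂ‖ :=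
    calc 2 * c * ‖w‖ ≤ ‖det2 (a k) (a l)‖ * ‖w‖ := by gcongr; exact hsep k l hkl
      _ ≤ ‖a k‖ * ‖⟪w, a l⟫_ℂ‖ + ‖a l‖ * ‖⟪w, a k⟫_ℂ‖ := norm_det2_mul_norm_le _ _ _
      _ ≤ ‖⟪w, a l⟫_ℂ‖ + ‖⟪w, a k⟫_ℂ‖ := by
        gcongr <;> apply mul_le_of_le_one_left (norm_nonneg _) (ha _)
  linarith

lemma two_div_pi_mul_min_le_sin {x : ℝ} (hx₀ : 0 ≤ x) (hxπ : x ≤ π) :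
    2 / π * min x (π - x) ≤ Real.sin x := by
  rcases le_total x (π / 2) with hx | hx
  · exact (mul_le_mul_of_nonneg_left (min_le_left _ _) (by positivity)).trans
      (Real.mul_le_sin hx₀ hx)
  · rw [← Real.sin_pi_sub]
    exact (mul_le_mul_of_nonneg_left (min_le_right _ _) (by positivity)).trans
      (Real.mul_le_sin (by linarith) (by linarith))

lemma two_div_le_sin_pi_mul_div {N d : ℕ} (hd : 0 < d) (hdN : d < N) :
    2 / N ≤ Real.sin (π * d / N) := by
  have hN : (0 : ℝ) < N := by exact_mod_cast hd.trans hdN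
  have hd' : (1 : ℝ) ≤ d := by exact_mod_cast hd
  have hdN' : (d : ℝ) + 1 ≤ N := by exact_mod_cast hdN
  have hmin : π / N ≤ min (π * d / N) (π - π * d / N) := by
    rw [le_min_iff, div_le_div_iff_of_pos_right hN, le_sub_iff_add_le, ← add_div,
      div_le_iff₀ hN]
    constructor <;> nlinarith [Real.pi_pos]
  calc 2 / N = 2 / π * (π / N) := by field_simp
    _ ≤ 2 / π * min (π * d / N) (π - π * d / N) := by gcongr
    _ ≤ _ := two_div_pi_mul_min_le_sin (by positivity)
        (by rw [div_le_iff₀ hN]; nlinarith [Real.pi_pos])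

lemma four_div_le_norm_exp_sub_exp {N k l : ℕ} (hkl : k < l) (hl : l < N) :
    4 / N ≤ ‖Complex.exp (I * ↑(2 * π * l / N)) - Complex.exp (I * ↑(2 * π * k / N))‖ := by
  have hN : (N : ℝ) ≠ 0 := Nat.cast_ne_zero.mpr (by omega)
  have hsplit : Complex.exp (I * ↑(2 * π * l / N)) - Complex.exp (I * ↑(2 * π * k / N)) =
      Complex.exp (I * ↑(2 * π * k / N)) * (Complex.exp (I * ↑(2 * π * ↑(l - k) / N)) - 1) := by
    rw [mul_sub, mul_one, ← Complex.exp_add, Nat.cast_sub hkl.le]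
    congr 2
    push_cast
    field_simp
    ring
  have hsin := two_div_le_sin_pi_mul_div (Nat.sub_pos_of_lt hkl) ((Nat.sub_le l k).trans_lt hl)
  rw [hsplit, norm_mul, Complex.norm_exp_I_mul_ofReal, one_mul,
    Complex.norm_exp_I_mul_ofReal_sub_one, norm_mul, Real.norm_eq_abs,
    show 2 * π * ↑(l - k) / N / 2 = π * ↑(l - k) / N by ring,
    Real.norm_of_nonneg ((by positivity : (0 : ℝ) ≤ 2 / N).trans hsin)]
  linarith [show (4 : ℝ) / N = 2 * (2 / N) by ring]

noncomputable def circlePoint (N k : ℕ) : ℂ² :=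
  toLp 2 ((√2)⁻¹, (√2)⁻¹ * Complex.exp (I * ↑(2 * π * k / N)))

lemma norm_circlePoint (N k : ℕ) : ‖circlePoint N k‖ = 1 := by
  rw [prod_norm_eq_of_L2]
  simp only [circlePoint, toLp_fst, toLp_snd, norm_mul, Complex.norm_exp_I_mul_ofReal, mul_one,
    norm_inv, Complex.norm_real, Real.norm_eq_abs, abs_of_nonneg (Real.sqrt_nonneg 2), inv_pow,
    Real.sq_sqrt zero_le_two]
  norm_num

lemma two_div_le_norm_det2_circlePoint {N k l : ℕ} (hk : k < N) (hl : l < N) (hkl : k ≠ l) :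
    2 / N ≤ ‖det2 (circlePoint N k) (circlePoint N l)‖ := by
  have hdet : det2 (circlePoint N k) (circlePoint N l) =
      (Complex.exp (I * ↑(2 * π * l / N)) - Complex.exp (I * ↑(2 * π * k / N))) / 2 := by
    have hhalf : ((√2 : ℝ) : ℂ)⁻¹ * ((√2 : ℝ) : ℂ)⁻¹ = 1 / 2 := by
      rw [← mul_inv, ← Complex.ofReal_mul, Real.mul_self_sqrt zero_le_two]
      norm_num
    simp only [det2, circlePoint, toLp_fst, toLp_snd, Complex.ofReal_inv]
    linear_combination (Complex.exp (I * ↑(2 * π * l / N)) -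
      Complex.exp (I * ↑(2 * π * k / N))) * hhalf
  rw [hdet, norm_div, Complex.norm_two, le_div_iff₀ two_pos, div_mul_eq_mul_div,
    show (2 : ℝ) * 2 = 4 by norm_num]
  rcases lt_or_gt_of_ne hkl with h | h
  · exact four_div_le_norm_exp_sub_exp h hl
  · rw [norm_sub_rev]; exact four_div_le_norm_exp_sub_exp h hk

open Finset in
lemma prod_filter_lt_mul_eq_prod_pow {M : Type*} [CommMonoid M] {m : ℕ} (f : Fin (m + 1) → M) :
    ∏ p ∈ univ.filter (fun p : Fin (m + 1) × Fin (m + 1) => p.1 < p.2), f p.1 * f p.2 =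
      (∏ i, f i) ^ m := by
  have hfst : ∏ p ∈ univ.filter (fun p : Fin (m + 1) × Fin (m + 1) => p.1 < p.2), f p.1 =
      ∏ i, f i ^ (m - i) := by
    rw [prod_filter, Fintype.prod_prod_type]
    refine prod_congr rfl fun i _ => ?_
    rw [← prod_filter, filter_lt_eq_Ioi]
    simp only [prod_const, Fin.card_Ioi, Nat.add_sub_cancel]
  have hsnd : ∏ p ∈ univ.filter (fun p : Fin (m + 1) × Fin (m + 1) => p.1 < p.2), f p.2 =
      ∏ j, f j ^ (j : ℕ) := by
    rw [prod_filter, Fintype.prod_prod_type, prod_comm]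
    refine prod_congr rfl fun j _ => ?_
    rw [← prod_filter, filter_gt_eq_Iio]
    simp only [prod_const, Fin.card_Iio]
  rw [prod_mul_distrib, hfst, hsnd, ← prod_mul_distrib, ← prod_pow]
  refine prod_congr rfl fun i _ => ?_
  rw [← pow_add, Nat.sub_add_cancel (Nat.lt_succ_iff.mp i.isLt)]

noncomputable def linearForm (v : ℂ²) : MvPolynomial (Fin 2) ℂ :=
  C (conj v.fst) * X 0 + C (conj v.snd) * X 1

lemma eval_linearForm (v z : ℂ²) : eval ![z.fst, z.snd] (linearForm v) = ⟪v, z⟫_ℂ := by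
  simp [linearForm, mul_comm]

theorem prod_norm_le_pow_mul_sphereMax {ι : Type*} [Fintype ι] (v : ι → ℂ²) :
    ∏ i, ‖v i‖ ≤
      ((Fintype.card ι + 1 : ℕ) : ℝ) ^ Fintype.card ι * sphereMax (∏ i, linearForm (v i)) := by
  set N := Fintype.card ι + 1
  have hN : (0 : ℝ) < N := by positivity
  obtain ⟨k, hk⟩ := exists_forall_mul_norm_le_norm_inner (κ := Fin N) (by simp [N])
    (a := fun k => circlePoint N k) (fun k => (norm_circlePoint N k).le) (c := 1 / N)
    (fun k l hkl => by
      rw [mul_one_div]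
      exact two_div_le_norm_det2_circlePoint k.isLt l.isLt (Fin.val_ne_of_ne hkl)) v
  calc ∏ i, ‖v i‖ = (N : ℝ) ^ Fintype.card ι * ∏ i, (1 / N * ‖v i‖) := by
        rw [Finset.prod_mul_distrib, Finset.prod_const, Finset.card_univ, ← mul_assoc,
          ← mul_pow, mul_one_div_cancel hN.ne', one_pow, one_mul]
    _ ≤ (N : ℝ) ^ Fintype.card ι * ∏ i, ‖⟪v i, circlePoint N k⟫_ℂ‖ := by
        gcongr with i; exact hk i
    _ = (N : ℝ) ^ Fintype.card ι *
          ‖eval ![(circlePoint N k).fst, (circlePoint N k).snd] (∏ i, linearForm (v i))‖ := by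
        simp only [map_prod, norm_prod, eval_linearForm]
    _ ≤ _ := by gcongr; exact norm_eval_le_sphereMax _ (norm_circlePoint N k)

lemma add_two_pow_le_pow {n : ℕ} (hn : 2 ≤ n) : (n + 2) ^ ((n + 1) * (2 * n)) ≤ n ^ (6 * n ^ 2) :=
  calc (n + 2) ^ ((n + 1) * (2 * n)) ≤ (n ^ 2) ^ ((n + 1) * (2 * n)) :=
        Nat.pow_le_pow_left (by nlinarith) _
    _ = n ^ (2 * ((n + 1) * (2 * n))) := by rw [← pow_mul]
    _ ≤ n ^ (6 * n ^ 2) := Nat.pow_le_pow_right (by omega) (by nlinarith)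

/-- For `h(x,y) = ∏ᵢ ((x,y), vᵢ)` homogeneous of degree `n+1 ≥ 3` with
`‖h‖_max = 1`, the discriminant `Σ = ∏_{i<j} (v_{i,1}v_{j,2} − v_{i,2}v_{j,1})²`
satisfies `|Σ| ≤ n^(6n²)`. -/
theorem stmt11 (n : ℕ) (hn : 2 ≤ n) (v : Fin (n + 1) → ℂ × ℂ)
    (h : MvPolynomial (Fin 2) ℂ)
    (hh : h = ∏ i, (C ((starRingEnd ℂ) (v i).1) * X 0 +
      C ((starRingEnd ℂ) (v i).2) * X 1))
    (hmax : sphereMax h = 1) :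
    ‖∏ p ∈ Finset.univ.filter (fun p : Fin (n + 1) × Fin (n + 1) => p.1 < p.2),
        ((v p.1).1 * (v p.2).2 - (v p.1).2 * (v p.2).1) ^ 2‖ ≤
      (n : ℝ) ^ (6 * n ^ 2) := by
  set w : Fin (n + 1) → ℂ² := fun i => toLp 2 (v i)
  have hprod : ∏ i, ‖w i‖ ≤ ((n + 2 : ℕ) : ℝ) ^ (n + 1) := by
    have := prod_norm_le_pow_mul_sphereMax w
    rwa [show ∏ i, linearForm (w i) = h from hh.symm, hmax, mul_one, Fintype.card_fin] at this
  calc ‖∏ p ∈ Finset.univ.filter (fun p : Fin (n + 1) × Fin (n + 1) => p.1 < p.2),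
          det2 (w p.1) (w p.2) ^ 2‖
      ≤ ∏ p ∈ Finset.univ.filter (fun p : Fin (n + 1) × Fin (n + 1) => p.1 < p.2),
          (‖w p.1‖ ^ 2 * ‖w p.2‖ ^ 2) := by
        rw [norm_prod]
        gcongr with p
        rw [norm_pow, ← mul_pow]
        gcongr
        exact norm_det2_le _ _
    _ = ((∏ i, ‖w i‖) ^ 2) ^ n := by
        rw [prod_filter_lt_mul_eq_prod_pow (fun i => ‖w i‖ ^ 2), Finset.prod_pow]
    _ ≤ ((((n + 2 : ℕ) : ℝ) ^ (n + 1)) ^ 2) ^ n := by gcongr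
    _ ≤ (n : ℝ) ^ (6 * n ^ 2) := by
        rw [← pow_mul, ← pow_mul]
        exact_mod_cast add_two_pow_le_pow hn
end

section
/- Let h(x,y) = c_{−1} ∏_{i=0}^{n} (y − c_i x) be a homogeneous polynomial of degree n+1 ≥ 3 with ‖h‖_max = 1 (the maximum of |h| on the unit sphere of ℂ²), and suppose the Fubini–Study distance of the y-axis to each zero line {y = c_i x} of h is greater than 1/√n. Then |c_i| < √n for every i, and (n+1)^{−(n+1)/2} < |c_{−1}| ≤ 1. -/
open MvPolynomial

/-- Hermitian inner product on ℂ², linear in the first argument. -/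
noncomputable def hinner (v w : ℂ × ℂ) : ℂ :=
  v.1 * (starRingEnd ℂ) w.1 + v.2 * (starRingEnd ℂ) w.2

/-- Hermitian norm on ℂ². -/
noncomputable def hnorm (v : ℂ × ℂ) : ℝ := Real.sqrt (‖v.1‖ ^ 2 + ‖v.2‖ ^ 2)

/-- Fubini–Study distance between the complex lines through the origin
spanned by `u` and `v` (the angle between the lines). -/
noncomputable def fsDist (u v : ℂ × ℂ) : ℝ :=
  Real.arccos (‖hinner u v‖ / (hnorm u * hnorm v))

/-!
The line `{y = c x}` makes the angle `π/2 - arctan |c|` with the `y`-axis, so a distance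
greater than `a = 1/√n` forces `|c| < cot a < 1/a = √n`, using `tan a > a`.
On the unit sphere each factor satisfies `|y - cᵢ x| ≤ √(1 + |cᵢ|²)` by Cauchy–Schwarz, whence
`1 = ‖h‖_max ≤ |c₋₁| ∏ √(1 + |cᵢ|²) < |c₋₁| (n+1)^((n+1)/2)`, while `|c₋₁| = |h(0,1)| ≤ 1`.
-/

open Real

theorem fsDist_yAxis (z : ℂ) : fsDist (0, 1) (1, z) = π / 2 - arctan ‖z‖ := by
  simp [fsDist, hinner, hnorm, arccos_eq_pi_div_two_sub_arcsin, arctan_eq_arcsin, add_comm]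

theorem norm_lt_inv_of_lt_fsDist_yAxis {a : ℝ} (ha : 0 < a) {z : ℂ}
    (hz : a < fsDist (0, 1) (1, z)) : ‖z‖ < a⁻¹ := by
  rw [fsDist_yAxis] at hz
  have ha' : a < π / 2 := by linarith [arctan_nonneg.mpr (norm_nonneg z)]
  calc ‖z‖ < tan (π / 2 - a) := by
        rw [← arctan_lt_arctan_iff, arctan_tan (by linarith) (by linarith)]
        linarith
    _ = (tan a)⁻¹ := tan_pi_div_two_sub a
    _ < a⁻¹ := inv_strictAnti₀ ha (lt_tan ha ha')

theorem norm_sub_mul_le_sqrt {x y : ℂ} (hxy : ‖x‖ ^ 2 + ‖y‖ ^ 2 = 1) (c : ℂ) :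
    ‖y - c * x‖ ≤ √(1 + ‖c‖ ^ 2) := by
  have hcs : (‖y‖ + ‖c‖ * ‖x‖) ^ 2 ≤ 1 + ‖c‖ ^ 2 := by
    nlinarith [sq_nonneg (‖x‖ - ‖c‖ * ‖y‖)]
  calc ‖y - c * x‖ ≤ ‖y‖ + ‖c‖ * ‖x‖ := by
        simpa only [norm_mul] using norm_sub_le y (c * x)
    _ ≤ √(1 + ‖c‖ ^ 2) := le_sqrt_of_sq_le hcs

section sphereMax

variable {p : MvPolynomial (Fin 2) ℂ} {M : ℝ}
  (hM : ∀ x y : ℂ, ‖x‖ ^ 2 + ‖y‖ ^ 2 = 1 → ‖eval ![x, y] p‖ ≤ M)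
include hM

theorem norm_eval_le_sphereMax_s17 {x y : ℂ} (hxy : ‖x‖ ^ 2 + ‖y‖ ^ 2 = 1) :
    ‖eval ![x, y] p‖ ≤ sphereMax p :=
  le_csSup ⟨M, by rintro r ⟨x, y, hxy, rfl⟩; exact hM x y hxy⟩ ⟨x, y, hxy, rfl⟩

theorem sphereMax_le : sphereMax p ≤ M :=
  csSup_le ⟨_, 1, 0, by norm_num, rfl⟩ (by rintro r ⟨x, y, hxy, rfl⟩; exact hM x y hxy)

end sphereMax

section linearFactors

variable {ι : Type*} [Fintype ι] (a : ℂ) (c : ι → ℂ)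

theorem eval_C_mul_prod_linear (x y : ℂ) :
    eval ![x, y] (C a * ∏ i, (X 1 - C (c i) * X 0)) = a * ∏ i, (y - c i * x) := by
  simp

theorem norm_eval_C_mul_prod_linear_le {x y : ℂ} (hxy : ‖x‖ ^ 2 + ‖y‖ ^ 2 = 1) :
    ‖eval ![x, y] (C a * ∏ i, (X 1 - C (c i) * X 0))‖ ≤ ‖a‖ * ∏ i, √(1 + ‖c i‖ ^ 2) := by
  rw [eval_C_mul_prod_linear, norm_mul, norm_prod]
  gcongr with i
  exact norm_sub_mul_le_sqrt hxy (c i)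

theorem norm_le_sphereMax_C_mul_prod_linear :
    ‖a‖ ≤ sphereMax (C a * ∏ i, (X 1 - C (c i) * X 0)) := by
  simpa [eval_C_mul_prod_linear] using
    norm_eval_le_sphereMax_s17 (fun _ _ hxy => norm_eval_C_mul_prod_linear_le a c hxy)
      (show ‖(0 : ℂ)‖ ^ 2 + ‖(1 : ℂ)‖ ^ 2 = 1 by simp)

theorem sphereMax_C_mul_prod_linear_le :
    sphereMax (C a * ∏ i, (X 1 - C (c i) * X 0)) ≤ ‖a‖ * ∏ i, √(1 + ‖c i‖ ^ 2) :=
  sphereMax_le fun _ _ hxy => norm_eval_C_mul_prod_linear_le a c hxy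

end linearFactors

/-- For `h(x,y) = c₋₁ ∏ᵢ (y − cᵢ x)` of degree `n+1 ≥ 3` with `‖h‖_max = 1`,
if the Fubini–Study distance of the `y`-axis to each zero line `{y = cᵢ x}`
is greater than `1/√n`, then `|cᵢ| < √n` for all `i` and
`(n+1)^(−(n+1)/2) < |c₋₁| ≤ 1`. -/
theorem stmt17 (n : ℕ) (hn : 2 ≤ n) (cm : ℂ) (c : Fin (n + 1) → ℂ)
    (h : MvPolynomial (Fin 2) ℂ)
    (hh : h = C cm * ∏ i, (X 1 - C (c i) * X 0))
    (hmax : sphereMax h = 1)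
    (hdist : ∀ i, fsDist ((0 : ℂ), (1 : ℂ)) ((1 : ℂ), c i) > 1 / Real.sqrt n) :
    (∀ i, ‖c i‖ < Real.sqrt n) ∧
      ((n : ℝ) + 1) ^ (-(((n : ℝ) + 1) / 2)) < ‖cm‖ ∧ ‖cm‖ ≤ 1 := by
  have hc (i : Fin (n + 1)) : ‖c i‖ < √n := by
    have hn0 : (0 : ℝ) < n := Nat.cast_pos.mpr (by omega)
    simpa using norm_lt_inv_of_lt_fsDist_yAxis (by positivity) (hdist i)
  subst hh
  have hcm_le : ‖cm‖ ≤ 1 := (norm_le_sphereMax_C_mul_prod_linear cm c).trans hmax.le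
  have hone_le : 1 ≤ ‖cm‖ * ∏ i, √(1 + ‖c i‖ ^ 2) :=
    hmax.symm.le.trans (sphereMax_C_mul_prod_linear_le cm c)
  have hprod : ∏ i, √(1 + ‖c i‖ ^ 2) < ∏ _i : Fin (n + 1), √((n : ℝ) + 1) := by
    refine Finset.prod_lt_prod_of_nonempty (fun i _ => by positivity) (fun i _ => ?_)
      Finset.univ_nonempty
    have := hc i
    apply sqrt_lt_sqrt (by positivity)
    nlinarith [sq_sqrt (Nat.cast_nonneg (α := ℝ) n), norm_nonneg (c i)]
  have hpow : ((n : ℝ) + 1) ^ (((n : ℝ) + 1) / 2) = ∏ _i : Fin (n + 1), √((n : ℝ) + 1) := by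
    rw [Finset.prod_const, Finset.card_univ, Fintype.card_fin, sqrt_eq_rpow,
      ← rpow_natCast, ← rpow_mul (by positivity)]
    push_cast
    ring_nf
  have hcm_pos : 0 < ‖cm‖ := pos_of_mul_pos_left (one_pos.trans_le hone_le) (by positivity)
  refine ⟨hc, ?_, hcm_le⟩
  rw [rpow_neg (by positivity), hpow, inv_lt_iff_one_lt_mul₀ (by positivity)]
  calc 1 ≤ ‖cm‖ * ∏ i, √(1 + ‖c i‖ ^ 2) := hone_le
    _ < ‖cm‖ * ∏ _i : Fin (n + 1), √((n : ℝ) + 1) := mul_lt_mul_of_pos_left hprod hcm_pos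
end
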